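/- arXiv:2301.13133 — 5 statements merged into one kernel-verified Lean document; each statement's English description precedes it below -/
import Mathlib

section
/- Under internal validity of the observational study and external validity (transportability of the CATE), the CATE of the RCT population is identified from observational data: for every x with P(X=x, S=0) > 0 and P(X=x, S=1) > 0 and with P(X=x, A=a, S=1) > 0 for a ∈ {0,1}, one has E[Y₁ − Y₀ | X=x, S=0] = E[Y | X=x, A=1, S=1] − E[Y | X=x, A=0, S=1]. -/
open MeasureTheory

/-- Conditional expectation of `Z` given the event `E`: `E[Z | E] = (∫_E Z dP) / P(E)`. -/
noncomputable def eCond {Ω : Type*} [MeasurableSpace Ω] (P : Measure Ω) (E : Set Ω)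
    (Z : Ω → ℝ) : ℝ :=
  (∫ ω in E, Z ω ∂P) / (P E).toReal

/-- Conditional probability of `E'` given the event `E`: `P(E' | E) = P(E' ∩ E) / P(E)`. -/
noncomputable def pCond {Ω : Type*} [MeasurableSpace Ω] (P : Measure Ω) (E' E : Set Ω) : ℝ :=
  (P (E' ∩ E)).toReal / (P E).toReal

/-- Under internal validity of the observational study and external validity
(transportability of the CATE), the CATE of the RCT population is identified from
observational data. -/
theorem cate_identification_from_observational
    {Ω 𝒳 : Type*} [MeasurableSpace Ω] [MeasurableSpace 𝒳]
    [Countable 𝒳] [MeasurableSingletonClass 𝒳]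
    (P : Measure Ω) [IsProbabilityMeasure P]
    (X : Ω → 𝒳) (S A : Ω → Fin 2) (Yp : Fin 2 → Ω → ℝ) (Y : Ω → ℝ)
    (hX : Measurable X) (hS : Measurable S) (hA : Measurable A)
    (hYp : ∀ a, Integrable (Yp a) P) (hY : Integrable Y P)
    -- internal validity of the observational study:
    (consistency : ∀ a : Fin 2, ∀ᵐ ω ∂P, S ω = 1 → A ω = a → Y ω = Yp a ω)
    (ignorability : ∀ a a' : Fin 2, ∀ x : 𝒳,
      0 < P {ω | X ω = x ∧ S ω = 1 ∧ A ω = a'} →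
      eCond P {ω | X ω = x ∧ S ω = 1 ∧ A ω = a'} (Yp a)
        = eCond P {ω | X ω = x ∧ S ω = 1} (Yp a))
    (posTreatment : ∀ a : Fin 2, ∀ x : 𝒳, 0 < P {ω | X ω = x ∧ S ω = 1} →
      0 < pCond P {ω | A ω = a} {ω | X ω = x ∧ S ω = 1})
    -- external validity (transportability of the CATE):
    (transport : ∀ x : 𝒳, 0 < P {ω | X ω = x ∧ S ω = 0} → 0 < P {ω | X ω = x ∧ S ω = 1} →
      eCond P {ω | X ω = x ∧ S ω = 0} (fun ω => Yp 1 ω - Yp 0 ω)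
        = eCond P {ω | X ω = x ∧ S ω = 1} (fun ω => Yp 1 ω - Yp 0 ω))
    (posSelection : ∀ x : 𝒳, 0 < P {ω | X ω = x ∧ S ω = 0} → 0 < P {ω | X ω = x ∧ S ω = 1}) :
    ∀ x : 𝒳, 0 < P {ω | X ω = x ∧ S ω = 0} → 0 < P {ω | X ω = x ∧ S ω = 1} →
      (∀ a : Fin 2, 0 < P {ω | X ω = x ∧ A ω = a ∧ S ω = 1}) →
      eCond P {ω | X ω = x ∧ S ω = 0} (fun ω => Yp 1 ω - Yp 0 ω)
        = eCond P {ω | X ω = x ∧ A ω = 1 ∧ S ω = 1} Y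
          - eCond P {ω | X ω = x ∧ A ω = 0 ∧ S ω = 1} Y := by

  intro x h0 h1 hpos
  -- key set definitions
  have hsetEq : ∀ a : Fin 2,
      {ω | X ω = x ∧ A ω = a ∧ S ω = 1} = {ω | X ω = x ∧ S ω = 1 ∧ A ω = a} := by
    intro a; ext ω; simp only [Set.mem_setOf_eq]; tauto
  have hmeas : ∀ a : Fin 2, MeasurableSet {ω | X ω = x ∧ A ω = a ∧ S ω = 1} := by
    intro a
    exact ((hX (measurableSet_singleton x)).inter
      ((hA (measurableSet_singleton a)).inter (hS (measurableSet_singleton 1))))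
  -- step 1: E[Y | X=x, A=a, S=1] = E[Yp a | X=x, S=1]
  have key : ∀ a : Fin 2,
      eCond P {ω | X ω = x ∧ A ω = a ∧ S ω = 1} Y
        = eCond P {ω | X ω = x ∧ S ω = 1} (Yp a) := by
    intro a
    have hint : ∫ ω in {ω | X ω = x ∧ A ω = a ∧ S ω = 1}, Y ω ∂P
        = ∫ ω in {ω | X ω = x ∧ A ω = a ∧ S ω = 1}, Yp a ω ∂P := by
      refine setIntegral_congr_ae (hmeas a) ?_
      filter_upwards [consistency a] with ω hω hmem
      exact hω hmem.2.2 hmem.2.1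
    have h2 : eCond P {ω | X ω = x ∧ A ω = a ∧ S ω = 1} Y
        = eCond P {ω | X ω = x ∧ A ω = a ∧ S ω = 1} (Yp a) := by
      unfold eCond; rw [hint]
    rw [h2, hsetEq a]
    exact ignorability a a x (by rw [← hsetEq a]; exact hpos a)
  rw [key 1, key 0, transport x h0 h1]
  -- step 2: linearity
  unfold eCond
  have hi1 : Integrable (Yp 1) (P.restrict {ω | X ω = x ∧ S ω = 1}) :=
    (hYp 1).restrict
  have hi0 : Integrable (Yp 0) (P.restrict {ω | X ω = x ∧ S ω = 1}) :=
    (hYp 0).restrict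
  rw [integral_sub hi1 hi0, sub_div]
end

section
/- Under internal validity of the RCT, internal validity of the observational study, external validity (transportability of the CATE), and overlap, the instance-wise signal difference ψ := ψ₁ − ψ₀ satisfies the conditional moment restrictions E[ψ | X=x] = 0 for every x with P(X=x) > 0. -/
open MeasureTheory

/-- The RCT CATE signal
`ψ₀ = (1{S=0} / P(S=0 | X)) · Y · (1{A=1}/p − 1{A=0}/(1−p))`. -/
noncomputable def psi0 {Ω 𝒳 : Type*} [MeasurableSpace Ω] (P : Measure Ω)
    (X : Ω → 𝒳) (S A : Ω → Fin 2) (Y : Ω → ℝ) (p : ℝ) (ω : Ω) : ℝ :=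
  ((if S ω = 0 then (1 : ℝ) else 0) / pCond P {ω' | S ω' = 0} {ω' | X ω' = X ω}) * Y ω *
    ((if A ω = 1 then (1 : ℝ) else 0) / p - (if A ω = 0 then (1 : ℝ) else 0) / (1 - p))

/-- The response surface `μ_a(x) = E[Y | X=x, A=a, S=1]`. -/
noncomputable def mu {Ω 𝒳 : Type*} [MeasurableSpace Ω] (P : Measure Ω)
    (X : Ω → 𝒳) (S A : Ω → Fin 2) (Y : Ω → ℝ) (a : Fin 2) (x : 𝒳) : ℝ :=
  eCond P {ω | X ω = x ∧ A ω = a ∧ S ω = 1} Y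

/-- The doubly robust observational CATE signal
`ψ₁ = (1 / P(S=0 | X)) · [ 1{S=0}·(μ₁(X) − μ₀(X)) + 1{S=1}·(P(S=0 | X)/P(S=1 | X)) ·
( 1{A=1}(Y − μ₁(X))/P(A=1 | X, S=1) − 1{A=0}(Y − μ₀(X))/P(A=0 | X, S=1) ) ]`. -/
noncomputable def psi1 {Ω 𝒳 : Type*} [MeasurableSpace Ω] (P : Measure Ω)
    (X : Ω → 𝒳) (S A : Ω → Fin 2) (Y : Ω → ℝ) (ω : Ω) : ℝ :=
  (1 / pCond P {ω' | S ω' = 0} {ω' | X ω' = X ω}) *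
    ((if S ω = 0 then (1 : ℝ) else 0) * (mu P X S A Y 1 (X ω) - mu P X S A Y 0 (X ω)) +
      (if S ω = 1 then (1 : ℝ) else 0) *
        (pCond P {ω' | S ω' = 0} {ω' | X ω' = X ω} /
          pCond P {ω' | S ω' = 1} {ω' | X ω' = X ω}) *
        ((if A ω = 1 then (1 : ℝ) else 0) * (Y ω - mu P X S A Y 1 (X ω)) /
            pCond P {ω' | A ω' = 1} {ω' | X ω' = X ω ∧ S ω' = 1} -
          (if A ω = 0 then (1 : ℝ) else 0) * (Y ω - mu P X S A Y 0 (X ω)) /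
            pCond P {ω' | A ω' = 0} {ω' | X ω' = X ω ∧ S ω' = 1}))

/-! Fix `x` with `P(X = x) > 0`. On `{X = x}` both signals are affine in `Y`, with coefficients
depending only on `(S, A)`, so their integrals over `{X = x}` are sums over the four cells
`{X = x, S = s, A = a}`. For `ψ₀` the inverse-propensity weights cancel the cell masses
`p · P(X = x, S = 0)` and `(1 - p) · P(X = x, S = 0)`, and consistency and ignorability turn
`E[ψ₀ | X = x]` into the RCT CATE. For `ψ₁` the residuals `Y - μ_a(x)` have mean zero on the
observational cells, leaving `E[ψ₁ | X = x] = μ₁(x) - μ₀(x)`, which consistency and ignorability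
identify with the observational CATE. Transportability equates the two CATEs. -/

section ConditionalMean

variable {Ω : Type*} [MeasurableSpace Ω] {P : Measure Ω}

theorem eCond_congr_ae {E : Set Ω} (hE : MeasurableSet E) {Z W : Ω → ℝ}
    (h : ∀ᵐ ω ∂P, ω ∈ E → Z ω = W ω) : eCond P E Z = eCond P E W := by
  rw [eCond, eCond, setIntegral_congr_ae hE h]

theorem eCond_sub {E : Set Ω} {Z W : Ω → ℝ} (hZ : IntegrableOn Z E P) (hW : IntegrableOn W E P) :
    eCond P E (fun ω => Z ω - W ω) = eCond P E Z - eCond P E W := by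
  rw [eCond, eCond, eCond, integral_sub hZ hW, sub_div]

theorem measure_inter_pos_of_pCond_pos {E' E : Set Ω} (h : 0 < pCond P E' E) :
    0 < P (E' ∩ E) := by
  refine pos_iff_ne_zero.mpr fun h0 => ?_
  simp [pCond, h0] at h

variable [IsFiniteMeasure P]

theorem setIntegral_eq_eCond_mul (E : Set Ω) (Z : Ω → ℝ) :
    ∫ ω in E, Z ω ∂P = eCond P E Z * P.real E := by
  by_cases hE : P.real E = 0
  · rw [hE, mul_zero, Measure.restrict_eq_zero.mpr ((measureReal_eq_zero_iff).mp hE),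
      integral_zero_measure]
  · exact (div_mul_cancel₀ _ hE).symm

theorem setIntegral_eq_mul_measureReal {E : Set Ω} (hE : MeasurableSet E) {Y Z : Ω → ℝ} {c : ℝ}
    (hYZ : ∀ᵐ ω ∂P, ω ∈ E → Y ω = Z ω) (hZ : 0 < P E → eCond P E Z = c) :
    ∫ ω in E, Y ω ∂P = c * P.real E := by
  rcases eq_or_ne (P E) 0 with h | h
  · simp [Measure.restrict_eq_zero.mpr h, measureReal_def, h]
  · rw [setIntegral_eq_eCond_mul, eCond_congr_ae hE hYZ, hZ (pos_iff_ne_zero.mpr h)]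

variable {β : Type*} [Fintype β] [MeasurableSpace β] [MeasurableSingletonClass β]
  {g : Ω → β} {E : Set Ω} {Y : Ω → ℝ}

theorem integrableOn_affine_comp (hg : Measurable g) (hY : IntegrableOn Y E P) (a b : β → ℝ) :
    IntegrableOn (fun ω => a (g ω) + b (g ω) * Y ω) E P := by
  have hbound (i : β) : ‖b i‖ ≤ ∑ j, ‖b j‖ :=
    Finset.single_le_sum (fun j _ => norm_nonneg (b j)) (Finset.mem_univ i)
  exact (Integrable.of_finite.comp_measurable hg).add <|
    hY.bdd_mul ((measurable_of_finite b).comp hg).aestronglyMeasurable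
      (Filter.Eventually.of_forall fun ω => hbound (g ω))

theorem setIntegral_affine_comp (hg : Measurable g) (hE : MeasurableSet E)
    (hY : IntegrableOn Y E P) (a b : β → ℝ) :
    ∫ ω in E, (a (g ω) + b (g ω) * Y ω) ∂P
      = ∑ i, (a i * P.real (E ∩ g ⁻¹' {i}) + b i * ∫ ω in E ∩ g ⁻¹' {i}, Y ω ∂P) := by
  have hfiber (i : β) : MeasurableSet (E ∩ g ⁻¹' {i}) := hE.inter (hg (measurableSet_singleton i))
  have hcover : ⋃ i, E ∩ g ⁻¹' {i} = E := by
    ext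
    simp
  have hdisj : Pairwise fun i j => Disjoint (E ∩ g ⁻¹' {i}) (E ∩ g ⁻¹' {j}) := fun i j hij =>
    Set.disjoint_left.mpr fun ω hi hj => hij (hi.2.symm.trans hj.2)
  conv_lhs => rw [← hcover]
  rw [integral_iUnion_fintype hfiber hdisj
    fun i => (integrableOn_affine_comp hg hY a b).mono_set Set.inter_subset_left]
  refine Finset.sum_congr rfl fun i _ => ?_
  have hY' : IntegrableOn Y (E ∩ g ⁻¹' {i}) P := hY.mono_set Set.inter_subset_left
  rw [setIntegral_congr_fun (hfiber i) (g := fun ω => a i + b i * Y ω)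
      fun ω hω => by rw [show g ω = i from hω.2],
    integral_add (integrable_const _) (hY'.const_mul _), integral_const_mul, setIntegral_const,
    smul_eq_mul, mul_comm]

end ConditionalMean

section CausalModel

variable {Ω 𝒳 : Type*} {X : Ω → 𝒳} {S A : Ω → Fin 2} {Y : Ω → ℝ} {x : 𝒳}

theorem inter_preimage_prodMk_eq_cell (x : 𝒳) (s a : Fin 2) :
    {ω | X ω = x} ∩ (fun ω => (S ω, A ω)) ⁻¹' {(s, a)} = {ω | X ω = x ∧ S ω = s ∧ A ω = a} := by
  ext ω
  simp

theorem inter_setOf_eq_cell (s a : Fin 2) :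
    {ω | A ω = a} ∩ {ω | X ω = x ∧ S ω = s} = {ω | X ω = x ∧ S ω = s ∧ A ω = a} := by
  ext ω
  simp only [Set.mem_inter_iff, Set.mem_ofPred_eq]
  tauto

variable [MeasurableSpace Ω] {P : Measure Ω}

theorem pCond_selection_eq_div (s : Fin 2) :
    pCond P {ω | S ω = s} {ω | X ω = x}
      = P.real {ω | X ω = x ∧ S ω = s} / P.real {ω | X ω = x} := by
  rw [pCond, Set.inter_comm]
  rfl

theorem mu_eq_eCond_cell (a : Fin 2) :
    mu P X S A Y a x = eCond P {ω | X ω = x ∧ S ω = 1 ∧ A ω = a} Y := by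
  rw [mu]
  congr 1
  ext ω
  simp only [Set.mem_ofPred_eq, and_comm]

variable [MeasurableSpace 𝒳] [MeasurableSingletonClass 𝒳]

theorem measurableSet_cell (hX : Measurable X) (hS : Measurable S) (hA : Measurable A)
    (x : 𝒳) (s a : Fin 2) : MeasurableSet {ω | X ω = x ∧ S ω = s ∧ A ω = a} :=
  (hX (measurableSet_singleton x)).inter
    ((hS (measurableSet_singleton s)).inter (hA (measurableSet_singleton a)))

theorem mu_eq_eCond (hX : Measurable X) (hS : Measurable S) (hA : Measurable A) {a : Fin 2}
    {Ya : Ω → ℝ} (hcons : ∀ᵐ ω ∂P, S ω = 1 → A ω = a → Y ω = Ya ω)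
    (hign : 0 < P {ω | X ω = x ∧ S ω = 1 ∧ A ω = a} →
      eCond P {ω | X ω = x ∧ S ω = 1 ∧ A ω = a} Ya = eCond P {ω | X ω = x ∧ S ω = 1} Ya)
    (hpos : 0 < pCond P {ω | A ω = a} {ω | X ω = x ∧ S ω = 1}) :
    mu P X S A Y a x = eCond P {ω | X ω = x ∧ S ω = 1} Ya := by
  have hcell := measure_inter_pos_of_pCond_pos hpos
  rw [inter_setOf_eq_cell] at hcell
  rw [mu_eq_eCond_cell, eCond_congr_ae (measurableSet_cell hX hS hA x 1 a)
    (hcons.mono fun ω h hω => h hω.2.1 hω.2.2), hign hcell]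

variable [IsFiniteMeasure P]

theorem measureReal_cell_add (hX : Measurable X) (hS : Measurable S) (hA : Measurable A)
    (s : Fin 2) :
    P.real {ω | X ω = x ∧ S ω = s ∧ A ω = 0} + P.real {ω | X ω = x ∧ S ω = s ∧ A ω = 1}
      = P.real {ω | X ω = x ∧ S ω = s} := by
  rw [← measureReal_union _ (measurableSet_cell hX hS hA x s 1)]
  · congr 1
    ext ω
    simp only [Set.mem_union]
    rcases eq_or_ne (A ω) 0 with h | h
    · simp [h]
    · simp [Fin.eq_one_of_ne_zero _ h]
  · exact Set.disjoint_left.mpr fun ω h0 h1 => by simp [h0.2.2] at h1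

theorem integrableOn_psi0_and_eCond (hX : Measurable X) (hS : Measurable S) (hA : Measurable A)
    (hY : Integrable Y P) {p : ℝ} (hp0 : 0 < p) (hp1 : p < 1) {Yp : Fin 2 → Ω → ℝ}
    (hE0 : 0 < P {ω | X ω = x ∧ S ω = 0})
    (hcons : ∀ a : Fin 2, ∀ᵐ ω ∂P, S ω = 0 → A ω = a → Y ω = Yp a ω)
    (hign : ∀ a : Fin 2, 0 < P {ω | X ω = x ∧ S ω = 0 ∧ A ω = a} →
      eCond P {ω | X ω = x ∧ S ω = 0 ∧ A ω = a} (Yp a) = eCond P {ω | X ω = x ∧ S ω = 0} (Yp a))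
    (hfix : pCond P {ω | A ω = 1} {ω | X ω = x ∧ S ω = 0} = p) :
    IntegrableOn (psi0 P X S A Y p) {ω | X ω = x} P ∧
      eCond P {ω | X ω = x} (psi0 P X S A Y p)
        = eCond P {ω | X ω = x ∧ S ω = 0} (Yp 1) - eCond P {ω | X ω = x ∧ S ω = 0} (Yp 0) := by
  have hcell (a : Fin 2) : ∫ ω in {ω | X ω = x ∧ S ω = 0 ∧ A ω = a}, Y ω ∂P
      = eCond P {ω | X ω = x ∧ S ω = 0} (Yp a) * P.real {ω | X ω = x ∧ S ω = 0 ∧ A ω = a} :=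
    setIntegral_eq_mul_measureReal (measurableSet_cell hX hS hA x 0 a)
      ((hcons a).mono fun ω h hω => h hω.2.1 hω.2.2) (hign a)
  have hE0' : P.real {ω | X ω = x ∧ S ω = 0} ≠ 0 := (measureReal_ne_zero_iff).2 hE0.ne'
  have htreated :
      P.real {ω | X ω = x ∧ S ω = 0 ∧ A ω = 1} = p * P.real {ω | X ω = x ∧ S ω = 0} := by
    rw [← hfix, pCond, inter_setOf_eq_cell, ← measureReal_def, ← measureReal_def,
      div_mul_cancel₀ _ hE0']
  have hcontrol : P.real {ω | X ω = x ∧ S ω = 0 ∧ A ω = 0}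
      = (1 - p) * P.real {ω | X ω = x ∧ S ω = 0} := by
    linarith [measureReal_cell_add (P := P) (x := x) hX hS hA 0]
  have hEx : MeasurableSet {ω | X ω = x} := hX (measurableSet_singleton x)
  set q₀ := pCond P {ω | S ω = 0} {ω | X ω = x}
  set w : Fin 2 × Fin 2 → ℝ := fun sa => (if sa.1 = 0 then 1 else 0) / q₀ *
    ((if sa.2 = 1 then 1 else 0) / p - (if sa.2 = 0 then 1 else 0) / (1 - p))
  have hrep : Set.EqOn (psi0 P X S A Y p)
      (fun ω => (0 : Fin 2 × Fin 2 → ℝ) (S ω, A ω) + w (S ω, A ω) * Y ω) {ω | X ω = x} :=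
    fun ω hω => by
      simp only [psi0, show X ω = x from hω, q₀, w, Pi.zero_apply]
      ring
  refine ⟨(integrableOn_affine_comp (g := fun ω => (S ω, A ω)) (hS.prodMk hA) hY.integrableOn
    0 w).congr_fun hrep.symm hEx, ?_⟩
  rw [eCond, setIntegral_congr_fun hEx hrep,
    setIntegral_affine_comp (g := fun ω => (S ω, A ω)) (hS.prodMk hA) hEx hY.integrableOn 0 w,
    Fintype.sum_prod_type]
  simp only [Fin.sum_univ_two, inter_preimage_prodMk_eq_cell, hcell, w, Pi.zero_apply,
    one_ne_zero, zero_ne_one, ↓reduceIte]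
  have hN : P.real {ω | X ω = x} ≠ 0 :=
    (measureReal_ne_zero_iff).2 (hE0.trans_le (measure_mono fun _ h => h.1)).ne'
  have hp1' : 1 - p ≠ 0 := by linarith
  rw [htreated, hcontrol, show q₀ = _ from pCond_selection_eq_div 0, ← measureReal_def]
  field_simp
  ring

theorem integrableOn_psi1_and_eCond (hX : Measurable X) (hS : Measurable S) (hA : Measurable A)
    (hY : Integrable Y P) (hE0 : 0 < P {ω | X ω = x ∧ S ω = 0}) :
    IntegrableOn (psi1 P X S A Y) {ω | X ω = x} P ∧
      eCond P {ω | X ω = x} (psi1 P X S A Y) = mu P X S A Y 1 x - mu P X S A Y 0 x := by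
  have hobs (a : Fin 2) : ∫ ω in {ω | X ω = x ∧ S ω = 1 ∧ A ω = a}, Y ω ∂P
      = mu P X S A Y a x * P.real {ω | X ω = x ∧ S ω = 1 ∧ A ω = a} := by
    rw [mu_eq_eCond_cell]
    exact setIntegral_eq_eCond_mul _ _
  have hEx : MeasurableSet {ω | X ω = x} := hX (measurableSet_singleton x)
  set q₀ := pCond P {ω | S ω = 0} {ω | X ω = x}
  set q₁ := pCond P {ω | S ω = 1} {ω | X ω = x}
  set e₀ := pCond P {ω | A ω = 0} {ω | X ω = x ∧ S ω = 1}
  set e₁ := pCond P {ω | A ω = 1} {ω | X ω = x ∧ S ω = 1}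
  set α : Fin 2 × Fin 2 → ℝ := fun sa => 1 / q₀ *
    ((if sa.1 = 0 then 1 else 0) * (mu P X S A Y 1 x - mu P X S A Y 0 x) +
      (if sa.1 = 1 then 1 else 0) * (q₀ / q₁) *
        ((if sa.2 = 0 then 1 else 0) * mu P X S A Y 0 x / e₀ -
          (if sa.2 = 1 then 1 else 0) * mu P X S A Y 1 x / e₁))
  set β : Fin 2 × Fin 2 → ℝ := fun sa => 1 / q₀ * ((if sa.1 = 1 then 1 else 0) * (q₀ / q₁) *
      ((if sa.2 = 1 then 1 else 0) / e₁ - (if sa.2 = 0 then 1 else 0) / e₀))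
  have hrep : Set.EqOn (psi1 P X S A Y) (fun ω => α (S ω, A ω) + β (S ω, A ω) * Y ω)
      {ω | X ω = x} := fun ω hω => by
    simp only [psi1, show X ω = x from hω, α, β, q₀, q₁, e₀, e₁]
    ring
  refine ⟨(integrableOn_affine_comp (g := fun ω => (S ω, A ω)) (hS.prodMk hA) hY.integrableOn
    α β).congr_fun hrep.symm hEx, ?_⟩
  rw [eCond, setIntegral_congr_fun hEx hrep,
    setIntegral_affine_comp (g := fun ω => (S ω, A ω)) (hS.prodMk hA) hEx hY.integrableOn α β,
    Fintype.sum_prod_type]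
  simp only [Fin.sum_univ_two, inter_preimage_prodMk_eq_cell, hobs, α, β,
    one_ne_zero, zero_ne_one, ↓reduceIte]
  have hN : P.real {ω | X ω = x} ≠ 0 :=
    (measureReal_ne_zero_iff).2 (hE0.trans_le (measure_mono fun _ h => h.1)).ne'
  have hq₀ : q₀ = (P.real {ω | X ω = x ∧ S ω = 0 ∧ A ω = 0} +
      P.real {ω | X ω = x ∧ S ω = 0 ∧ A ω = 1}) / P.real {ω | X ω = x} := by
    rw [measureReal_cell_add hX hS hA 0]
    exact pCond_selection_eq_div 0
  have hE0' : P.real {ω | X ω = x ∧ S ω = 0 ∧ A ω = 0} +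
      P.real {ω | X ω = x ∧ S ω = 0 ∧ A ω = 1} ≠ 0 := by
    rw [measureReal_cell_add hX hS hA 0]
    exact (measureReal_ne_zero_iff).2 hE0.ne'
  rw [hq₀, ← measureReal_def]
  field_simp
  ring

end CausalModel

theorem signal_difference_cmr_general
    {Ω 𝒳 : Type*} [MeasurableSpace Ω] [MeasurableSpace 𝒳]
    [MeasurableSingletonClass 𝒳]
    (P : Measure Ω) [IsProbabilityMeasure P]
    (X : Ω → 𝒳) (S A : Ω → Fin 2) (Yp : Fin 2 → Ω → ℝ) (Y : Ω → ℝ)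
    (hX : Measurable X) (hS : Measurable S) (hA : Measurable A)
    (hYp : ∀ a, Integrable (Yp a) P) (hY : Integrable Y P)
    (p : ℝ) (hp0 : 0 < p) (hp1 : p < 1)
    -- internal validity of the RCT:
    (consistencyRCT : ∀ a : Fin 2, ∀ᵐ ω ∂P, S ω = 0 → A ω = a → Y ω = Yp a ω)
    (ignorabilityRCT : ∀ a a' : Fin 2, ∀ x : 𝒳,
      0 < P {ω | X ω = x ∧ S ω = 0 ∧ A ω = a'} →
      eCond P {ω | X ω = x ∧ S ω = 0 ∧ A ω = a'} (Yp a)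
        = eCond P {ω | X ω = x ∧ S ω = 0} (Yp a))
    (fixedAssignment : ∀ x : 𝒳, 0 < P {ω | X ω = x ∧ S ω = 0} →
      pCond P {ω | A ω = 1} {ω | X ω = x ∧ S ω = 0} = p)
    -- internal validity of the observational study:
    (consistencyObs : ∀ a : Fin 2, ∀ᵐ ω ∂P, S ω = 1 → A ω = a → Y ω = Yp a ω)
    (ignorabilityObs : ∀ a a' : Fin 2, ∀ x : 𝒳,
      0 < P {ω | X ω = x ∧ S ω = 1 ∧ A ω = a'} →
      eCond P {ω | X ω = x ∧ S ω = 1 ∧ A ω = a'} (Yp a)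
        = eCond P {ω | X ω = x ∧ S ω = 1} (Yp a))
    (posTreatment : ∀ a : Fin 2, ∀ x : 𝒳, 0 < P {ω | X ω = x ∧ S ω = 1} →
      0 < pCond P {ω | A ω = a} {ω | X ω = x ∧ S ω = 1})
    -- external validity (transportability of the CATE):
    (transport : ∀ x : 𝒳, 0 < P {ω | X ω = x ∧ S ω = 0} → 0 < P {ω | X ω = x ∧ S ω = 1} →
      eCond P {ω | X ω = x ∧ S ω = 0} (fun ω => Yp 1 ω - Yp 0 ω)
        = eCond P {ω | X ω = x ∧ S ω = 1} (fun ω => Yp 1 ω - Yp 0 ω))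
    -- overlap:
    (overlap : ∀ x : 𝒳, 0 < P {ω | X ω = x} →
      0 < P {ω | X ω = x ∧ S ω = 0} ∧ 0 < P {ω | X ω = x ∧ S ω = 1}) :
    ∀ x : 𝒳, 0 < P {ω | X ω = x} →
      eCond P {ω | X ω = x} (fun ω => psi1 P X S A Y ω - psi0 P X S A Y p ω) = 0 := by
  intro x hx
  obtain ⟨hE0, hE1⟩ := overlap x hx
  obtain ⟨hint₁, hpsi₁⟩ := integrableOn_psi1_and_eCond hX hS hA hY hE0
  obtain ⟨hint₀, hpsi₀⟩ := integrableOn_psi0_and_eCond hX hS hA hY hp0 hp1 hE0 consistencyRCT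
    (fun a => ignorabilityRCT a a x) (fixedAssignment x hE0)
  have hmu (a : Fin 2) : mu P X S A Y a x = eCond P {ω | X ω = x ∧ S ω = 1} (Yp a) :=
    mu_eq_eCond hX hS hA (consistencyObs a) (ignorabilityObs a a x) (posTreatment a x hE1)
  have hcate (s : Fin 2) : eCond P {ω | X ω = x ∧ S ω = s} (fun ω => Yp 1 ω - Yp 0 ω)
      = eCond P {ω | X ω = x ∧ S ω = s} (Yp 1) - eCond P {ω | X ω = x ∧ S ω = s} (Yp 0) :=
    eCond_sub (hYp 1).integrableOn (hYp 0).integrableOn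
  rw [eCond_sub hint₁ hint₀, hpsi₁, hpsi₀, hmu 1, hmu 0, ← hcate, ← hcate,
    transport x hE0 hE1, sub_self]

/-- Under internal validity of the RCT, internal validity of the
observational study, external validity (transportability of the CATE), and overlap, the
instance-wise signal difference `ψ = ψ₁ − ψ₀` satisfies the conditional moment
restrictions `E[ψ | X=x] = 0` for every `x` with `P(X=x) > 0`. -/
theorem signal_difference_cmr
    {Ω 𝒳 : Type*} [MeasurableSpace Ω] [MeasurableSpace 𝒳]
    [Countable 𝒳] [MeasurableSingletonClass 𝒳]
    (P : Measure Ω) [IsProbabilityMeasure P]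
    (X : Ω → 𝒳) (S A : Ω → Fin 2) (Yp : Fin 2 → Ω → ℝ) (Y : Ω → ℝ)
    (hX : Measurable X) (hS : Measurable S) (hA : Measurable A)
    (hYp : ∀ a, Integrable (Yp a) P) (hY : Integrable Y P)
    (p : ℝ) (hp0 : 0 < p) (hp1 : p < 1)
    -- internal validity of the RCT:
    (consistencyRCT : ∀ a : Fin 2, ∀ᵐ ω ∂P, S ω = 0 → A ω = a → Y ω = Yp a ω)
    (ignorabilityRCT : ∀ a a' : Fin 2, ∀ x : 𝒳,
      0 < P {ω | X ω = x ∧ S ω = 0 ∧ A ω = a'} →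
      eCond P {ω | X ω = x ∧ S ω = 0 ∧ A ω = a'} (Yp a)
        = eCond P {ω | X ω = x ∧ S ω = 0} (Yp a))
    (fixedAssignment : ∀ x : 𝒳, 0 < P {ω | X ω = x ∧ S ω = 0} →
      pCond P {ω | A ω = 1} {ω | X ω = x ∧ S ω = 0} = p)
    -- internal validity of the observational study:
    (consistencyObs : ∀ a : Fin 2, ∀ᵐ ω ∂P, S ω = 1 → A ω = a → Y ω = Yp a ω)
    (ignorabilityObs : ∀ a a' : Fin 2, ∀ x : 𝒳,
      0 < P {ω | X ω = x ∧ S ω = 1 ∧ A ω = a'} →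
      eCond P {ω | X ω = x ∧ S ω = 1 ∧ A ω = a'} (Yp a)
        = eCond P {ω | X ω = x ∧ S ω = 1} (Yp a))
    (posTreatment : ∀ a : Fin 2, ∀ x : 𝒳, 0 < P {ω | X ω = x ∧ S ω = 1} →
      0 < pCond P {ω | A ω = a} {ω | X ω = x ∧ S ω = 1})
    -- external validity (transportability of the CATE):
    (transport : ∀ x : 𝒳, 0 < P {ω | X ω = x ∧ S ω = 0} → 0 < P {ω | X ω = x ∧ S ω = 1} →
      eCond P {ω | X ω = x ∧ S ω = 0} (fun ω => Yp 1 ω - Yp 0 ω)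
        = eCond P {ω | X ω = x ∧ S ω = 1} (fun ω => Yp 1 ω - Yp 0 ω))
    (posSelection : ∀ x : 𝒳, 0 < P {ω | X ω = x ∧ S ω = 0} → 0 < P {ω | X ω = x ∧ S ω = 1})
    -- overlap:
    (overlap : ∀ x : 𝒳, 0 < P {ω | X ω = x} →
      0 < P {ω | X ω = x ∧ S ω = 0} ∧ 0 < P {ω | X ω = x ∧ S ω = 1}) :
    ∀ x : 𝒳, 0 < P {ω | X ω = x} →
      eCond P {ω | X ω = x} (fun ω => psi1 P X S A Y ω - psi0 P X S A Y p ω) = 0 :=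
  signal_difference_cmr_general P X S A Yp Y hX hS hA hYp hY p hp0 hp1 consistencyRCT
    ignorabilityRCT fixedAssignment consistencyObs ignorabilityObs posTreatment transport overlap
end

section
/- Let k : ℝ^d × ℝ^d → ℝ be a continuous, bounded, symmetric, integrally strictly positive definite (ISPD) kernel, let X have law with density p with respect to Lebesgue measure, let ψ be square-integrable with h(x) := E[ψ | X=x]·p(x) in L²(ℝ^d), and let (ψ', X') be an independent copy of (ψ, X) with E[|ψ k(X,X') ψ'|] < ∞. Then E[ψ k(X, X') ψ'] = 0 if and only if E[ψ | X = x] = 0 for P_X-almost every x. (Equivalently, the maximum moment restriction 𝔐² vanishes exactly when the conditional moment restriction E[ψ | X] = 0 holds.) -/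
/-!
Put `h := E[ψ | X = ·] · p`. The pull-out property of conditional expectation followed by the
change of variables along the density `p` gives `E[ψ φ(X)] = ∫ h φ` for every bounded measurable
`φ`. Applying this in each factor of the product (Fubini, with `φ = k(x, ·)` and then with the
bounded kernel mean `φ = ∫ h(y) k(·, y) dy`) turns `E[ψ k(X, X') ψ']` into the quadratic form
`∬ h(x) k(x, x') h(x') dx dx'`. By integral strict positive definiteness this vanishes iff `h = 0`
Lebesgue-a.e., which is `E[ψ | X] = 0` `P_X`-a.e. because `P_X` does not charge `{p = 0}`.
-/

open MeasureTheory

section Density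

variable {Ω E : Type*} [MeasurableSpace Ω] [MeasurableSpace E] {P : Measure Ω} {μ : Measure E}
  {X : Ω → E} {p : E → ℝ}

theorem integral_comp_eq_integral_mul_of_map_eq_withDensity (hX : Measurable X)
    (hp : Measurable p) (hp0 : ∀ x, 0 ≤ p x)
    (hlaw : P.map X = μ.withDensity (fun x => ENNReal.ofReal (p x)))
    {f : E → ℝ} (hf : Measurable f) :
    ∫ ω, f (X ω) ∂P = ∫ x, f x * p x ∂μ := by
  rw [← integral_map hX.aemeasurable hf.aestronglyMeasurable, hlaw,
    integral_withDensity_eq_integral_toReal_smul hp.ennreal_ofReal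
      (ae_of_all _ fun _ => ENNReal.ofReal_lt_top)]
  simp only [ENNReal.toReal_ofReal (hp0 _), smul_eq_mul, mul_comm]

theorem integrable_mul_of_map_eq_withDensity (hX : Measurable X)
    (hp : Measurable p) (hp0 : ∀ x, 0 ≤ p x)
    (hlaw : P.map X = μ.withDensity (fun x => ENNReal.ofReal (p x)))
    {f : E → ℝ} (hf : Measurable f) (hfX : Integrable (fun ω => f (X ω)) P) :
    Integrable (fun x => f x * p x) μ := by
  have hf_law : Integrable f (P.map X) :=
    (integrable_map_measure hf.aestronglyMeasurable hX.aemeasurable).mpr hfX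
  rw [hlaw, integrable_withDensity_iff hp.ennreal_ofReal
    (ae_of_all _ fun _ => ENNReal.ofReal_lt_top)] at hf_law
  simpa only [ENNReal.toReal_ofReal (hp0 _)] using hf_law

theorem ae_withDensity_ofReal_eq_zero_iff (hp : Measurable p) (hp0 : ∀ x, 0 ≤ p x)
    {f : E → ℝ} :
    (∀ᵐ x ∂μ.withDensity (fun x => ENNReal.ofReal (p x)), f x = 0) ↔
      ∀ᵐ x ∂μ, f x * p x = 0 := by
  rw [ae_withDensity_iff hp.ennreal_ofReal]
  refine Filter.eventually_congr (ae_of_all _ fun x => ?_)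
  rw [ne_eq, ENNReal.ofReal_eq_zero, not_le, mul_eq_zero]
  rcases (hp0 x).eq_or_lt with hpx | hpx
  · simp [← hpx]
  · simp [hpx, hpx.ne']

end Density

section ConditionalExpectation

variable {Ω E : Type*} [MeasurableSpace Ω] [MeasurableSpace E] {P : Measure Ω} [IsFiniteMeasure P]
  {X : Ω → E} {ψ : Ω → ℝ} {g : E → ℝ}

theorem integral_mul_comp_eq_of_condExp_eq_comp (hX : Measurable X) (hψ : Integrable ψ P)
    (hgVersion : ∀ᵐ ω ∂P, (P[ψ | MeasurableSpace.comap X inferInstance]) ω = g (X ω))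
    {φ : E → ℝ} (hφ : Measurable φ) {C : ℝ} (hφC : ∀ x, |φ x| ≤ C) :
    ∫ ω, ψ ω * φ (X ω) ∂P = ∫ ω, g (X ω) * φ (X ω) ∂P := by
  have hφX : StronglyMeasurable[MeasurableSpace.comap X inferInstance] (φ ∘ X) :=
    (hφ.comp (comap_measurable X)).stronglyMeasurable
  have hint : Integrable ((φ ∘ X) * ψ) P :=
    hψ.bdd_mul (hφ.comp hX).aestronglyMeasurable (ae_of_all _ fun ω => hφC (X ω))
  calc ∫ ω, ψ ω * φ (X ω) ∂P = ∫ ω, ((φ ∘ X) * ψ) ω ∂P := by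
        simp only [Pi.mul_apply, Function.comp_apply, mul_comm]
    _ = ∫ ω, (P[(φ ∘ X) * ψ | MeasurableSpace.comap X inferInstance]) ω ∂P :=
        (integral_condExp hX.comap_le).symm
    _ = ∫ ω, g (X ω) * φ (X ω) ∂P := by
        refine integral_congr_ae ?_
        filter_upwards [condExp_mul_of_stronglyMeasurable_left hφX hint hψ, hgVersion]
          with ω hpull hω
        rw [hpull, Pi.mul_apply, hω, Function.comp_apply, mul_comm]

theorem integral_mul_comp_eq_integral_density_mul {μ : Measure E} {p : E → ℝ} (hX : Measurable X)
    (hp : Measurable p) (hp0 : ∀ x, 0 ≤ p x)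
    (hlaw : P.map X = μ.withDensity (fun x => ENNReal.ofReal (p x)))
    (hψ : Integrable ψ P) (hg : Measurable g)
    (hgVersion : ∀ᵐ ω ∂P, (P[ψ | MeasurableSpace.comap X inferInstance]) ω = g (X ω))
    {φ : E → ℝ} (hφ : Measurable φ) {C : ℝ} (hφC : ∀ x, |φ x| ≤ C) :
    ∫ ω, ψ ω * φ (X ω) ∂P = ∫ x, g x * p x * φ x ∂μ := by
  rw [integral_mul_comp_eq_of_condExp_eq_comp hX hψ hgVersion hφ hφC,
    integral_comp_eq_integral_mul_of_map_eq_withDensity hX hp hp0 hlaw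
      (f := fun x => g x * φ x) (hg.mul hφ)]
  exact integral_congr_ae (ae_of_all _ fun x => mul_right_comm _ _ _)

end ConditionalExpectation

section Kernel

variable {E : Type*} [MeasurableSpace E] {μ : Measure E} {k : E → E → ℝ}

theorem integral_integral_kernel_eq_zero_iff
    (hISPD : ∀ f : E → ℝ, Measurable f → MemLp f 2 μ → 0 < ∫ x, f x ^ 2 ∂μ →
      0 < ∫ x, ∫ x', f x * k x x' * f x' ∂μ ∂μ)
    {f : E → ℝ} (hf : Measurable f) (hf2 : MemLp f 2 μ) :
    ∫ x, ∫ x', f x * k x x' * f x' ∂μ ∂μ = 0 ↔ ∀ᵐ x ∂μ, f x = 0 := by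
  constructor
  · intro hzero
    have hsq : ∫ x, f x ^ 2 ∂μ = 0 := by
      by_contra hne
      have hpos := (integral_nonneg (f := fun x => f x ^ 2) fun x => sq_nonneg (f x)).lt_of_ne' hne
      exact (hISPD f hf hf2 hpos).ne' hzero
    filter_upwards [(integral_eq_zero_iff_of_nonneg (fun x => sq_nonneg (f x))
      hf2.integrable_sq).mp hsq] with x hx
    exact pow_eq_zero_iff two_ne_zero |>.mp hx
  · intro hf0
    refine integral_eq_zero_of_ae ?_
    filter_upwards [hf0] with x hx
    simp [hx]

theorem abs_integral_mul_kernel_le {h : E → ℝ} (hh : Integrable h μ) {C : ℝ}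
    (hkC : ∀ x y, |k x y| ≤ C) (x : E) :
    |∫ y, h y * k x y ∂μ| ≤ C * ∫ y, |h y| ∂μ := by
  rw [← integral_const_mul C fun y => |h y|, ← Real.norm_eq_abs (∫ y, h y * k x y ∂μ)]
  refine norm_integral_le_of_norm_le (hh.abs.const_mul C) (ae_of_all _ fun y => ?_)
  rw [Real.norm_eq_abs, abs_mul, mul_comm C]
  exact mul_le_mul_of_nonneg_left (hkC x y) (abs_nonneg _)

theorem measurable_integral_mul_kernel [SFinite μ] (hk : Measurable fun q : E × E => k q.1 q.2)
    {h : E → ℝ} (hh : Measurable h) :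
    Measurable fun x => ∫ y, h y * k x y ∂μ :=
  ((hh.comp measurable_snd).mul hk).stronglyMeasurable.integral_prod_right'.measurable

variable {Ω : Type*} [MeasurableSpace Ω] {P : Measure Ω} [SFinite P] [SFinite μ]
  {X : Ω → E} {ψ : Ω → ℝ}

theorem integral_prod_mul_kernel_mul_eq
    (hk : Measurable fun q : E × E => k q.1 q.2) {C : ℝ} (hkC : ∀ x y, |k x y| ≤ C)
    {h : E → ℝ} (hhm : Measurable h) (hh : Integrable h μ)
    (htransfer : ∀ φ : E → ℝ, Measurable φ → ∀ B : ℝ, (∀ x, |φ x| ≤ B) →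
      ∫ ω, ψ ω * φ (X ω) ∂P = ∫ x, h x * φ x ∂μ)
    (hInt : Integrable (fun ω : Ω × Ω => ψ ω.1 * k (X ω.1) (X ω.2) * ψ ω.2) (P.prod P)) :
    ∫ ω : Ω × Ω, ψ ω.1 * k (X ω.1) (X ω.2) * ψ ω.2 ∂(P.prod P) =
      ∫ x, ∫ x', h x * k x x' * h x' ∂μ ∂μ := by
  have hsection : ∀ x, ∫ ω, ψ ω * k x (X ω) ∂P = ∫ y, h y * k x y ∂μ := fun x =>
    htransfer _ (hk.comp measurable_prodMk_left) C (hkC x)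
  have hmean := htransfer _ (measurable_integral_mul_kernel hk hhm) _
    (abs_integral_mul_kernel_le hh hkC)
  rw [integral_prod _ hInt]
  calc ∫ ω, ∫ ω', ψ ω * k (X ω) (X ω') * ψ ω' ∂P ∂P
      = ∫ ω, ψ ω * ∫ y, h y * k (X ω) y ∂μ ∂P := by
        refine integral_congr_ae (ae_of_all _ fun ω => ?_)
        simp only [← hsection, ← integral_const_mul, mul_assoc, mul_comm (k _ _)]
    _ = ∫ x, ∫ x', h x * k x x' * h x' ∂μ ∂μ := by
        rw [hmean]
        refine integral_congr_ae (ae_of_all _ fun x => ?_)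
        simp only [← integral_const_mul, mul_assoc, mul_comm (k _ _)]

end Kernel

theorem mmr_zero_iff_cmr_general
    {Ω : Type*} [MeasurableSpace Ω] (P : Measure Ω) [IsProbabilityMeasure P]
    {d : ℕ} (X : Ω → (Fin d → ℝ)) (hX : Measurable X)
    (p : (Fin d → ℝ) → ℝ) (hpm : Measurable p) (hp0 : ∀ x, 0 ≤ p x)
    (hlaw : P.map X = volume.withDensity (fun x => ENNReal.ofReal (p x)))
    (k : (Fin d → ℝ) → (Fin d → ℝ) → ℝ)
    (hkCont : Continuous (fun q : (Fin d → ℝ) × (Fin d → ℝ) => k q.1 q.2))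
    (hkBdd : ∃ C : ℝ, ∀ x y, |k x y| ≤ C)
    (hISPD : ∀ f : (Fin d → ℝ) → ℝ, Measurable f → MemLp f 2 volume →
      0 < ∫ x, (f x) ^ 2 ∂volume →
      0 < ∫ x, ∫ x', f x * k x x' * f x' ∂volume ∂volume)
    (ψ : Ω → ℝ) (hψ : MemLp ψ 2 P)
    -- a fixed version `g` of the conditional expectation `E[ψ | X = ·]`:
    (g : (Fin d → ℝ) → ℝ) (hg : Measurable g)
    (hgVersion : ∀ᵐ ω ∂P, (P[ψ | MeasurableSpace.comap X inferInstance]) ω = g (X ω))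
    -- `h(x) = E[ψ | X=x]·p(x)` is in `L²(ℝ^d)`:
    (hhL2 : MemLp (fun x => g x * p x) 2 volume)
    -- `E[|ψ k(X,X') ψ'|] < ∞` on the product space:
    (hInt : Integrable (fun ω : Ω × Ω => ψ ω.1 * k (X ω.1) (X ω.2) * ψ ω.2) (P.prod P)) :
    (∫ ω : Ω × Ω, ψ ω.1 * k (X ω.1) (X ω.2) * ψ ω.2 ∂(P.prod P)) = 0 ↔
      ∀ᵐ x ∂(P.map X), g x = 0 := by
  obtain ⟨C, hkC⟩ := hkBdd
  have hψ1 : Integrable ψ P := hψ.integrable one_le_two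
  have hhm : Measurable fun x => g x * p x := hg.mul hpm
  have hh : Integrable (fun x => g x * p x) volume :=
    integrable_mul_of_map_eq_withDensity hX hpm hp0 hlaw hg (integrable_condExp.congr hgVersion)
  rw [integral_prod_mul_kernel_mul_eq hkCont.measurable hkC hhm hh
      (fun φ hφ _ hφC => integral_mul_comp_eq_integral_density_mul hX hpm hp0 hlaw hψ1 hg
        hgVersion hφ hφC) hInt,
    integral_integral_kernel_eq_zero_iff hISPD hhm hhL2, hlaw,
    ae_withDensity_ofReal_eq_zero_iff hpm hp0]

/-- For a continuous, bounded, symmetric, integrally strictly positive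
definite (ISPD) kernel `k` and a random vector `X` with density `p` w.r.t. Lebesgue
measure, the maximum moment restriction `E[ψ k(X,X') ψ'] = 0` (with `(ψ', X')` an
independent copy of `(ψ, X)`) holds if and only if the conditional moment restriction
`E[ψ | X = x] = 0` holds for `P_X`-almost every `x`. -/
theorem mmr_zero_iff_cmr
    {Ω : Type*} [MeasurableSpace Ω] (P : Measure Ω) [IsProbabilityMeasure P]
    {d : ℕ} (X : Ω → (Fin d → ℝ)) (hX : Measurable X)
    (p : (Fin d → ℝ) → ℝ) (hpm : Measurable p) (hp0 : ∀ x, 0 ≤ p x)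
    (hlaw : P.map X = volume.withDensity (fun x => ENNReal.ofReal (p x)))
    (k : (Fin d → ℝ) → (Fin d → ℝ) → ℝ)
    (hkCont : Continuous (fun q : (Fin d → ℝ) × (Fin d → ℝ) => k q.1 q.2))
    (hkBdd : ∃ C : ℝ, ∀ x y, |k x y| ≤ C)
    (hkSymm : ∀ x y, k x y = k y x)
    (hISPD : ∀ f : (Fin d → ℝ) → ℝ, Measurable f → MemLp f 2 volume →
      0 < ∫ x, (f x) ^ 2 ∂volume →
      0 < ∫ x, ∫ x', f x * k x x' * f x' ∂volume ∂volume)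
    (ψ : Ω → ℝ) (hψ : MemLp ψ 2 P)
    -- a fixed version `g` of the conditional expectation `E[ψ | X = ·]`:
    (g : (Fin d → ℝ) → ℝ) (hg : Measurable g)
    (hgVersion : ∀ᵐ ω ∂P, (P[ψ | MeasurableSpace.comap X inferInstance]) ω = g (X ω))
    -- `h(x) = E[ψ | X=x]·p(x)` is in `L²(ℝ^d)`:
    (hhL2 : MemLp (fun x => g x * p x) 2 volume)
    -- `E[|ψ k(X,X') ψ'|] < ∞` on the product space:
    (hInt : Integrable (fun ω : Ω × Ω => ψ ω.1 * k (X ω.1) (X ω.2) * ψ ω.2) (P.prod P)) :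
    (∫ ω : Ω × Ω, ψ ω.1 * k (X ω.1) (X ω.2) * ψ ω.2 ∂(P.prod P)) = 0 ↔
      ∀ᵐ x ∂(P.map X), g x = 0 :=
  mmr_zero_iff_cmr_general P X hX p hpm hp0 hlaw k hkCont hkBdd hISPD ψ hψ g hg hgVersion hhL2 hInt
end

section
/- For all real z > 0 and δ* with δ* − z > √(log 2), one has Φ(√2·(δ* − z)) − Φ(δ* − z) > Φ(√2·(δ* + z)) − Φ(δ* + z). -/
open MeasureTheory

/-- The standard normal cumulative distribution function
`Φ(x) = ∫_{−∞}^{x} (2π)^{−1/2} e^{−t²/2} dt`. -/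
noncomputable def Phi (x : ℝ) : ℝ :=
  ∫ t in Set.Iic x, Real.exp (-(t ^ 2) / 2) / Real.sqrt (2 * Real.pi)

noncomputable def phiPDF (t : ℝ) : ℝ := Real.exp (-(t ^ 2) / 2) / Real.sqrt (2 * Real.pi)

lemma phiPDF_cont : Continuous phiPDF := by
  unfold phiPDF
  fun_prop

lemma phiPDF_integrable : Integrable phiPDF := by
  have h : Integrable (fun t : ℝ => Real.exp (-(1/2 : ℝ) * t ^ 2)) :=
    integrable_exp_neg_mul_sq (by norm_num)
  have := h.div_const (Real.sqrt (2 * Real.pi))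
  refine this.congr ?_
  filter_upwards with t
  unfold phiPDF
  ring_nf

lemma hasDerivAt_Phi (x : ℝ) : HasDerivAt Phi (phiPDF x) x := by
  have key : ∀ y : ℝ, Phi y = Phi 0 + ∫ t in (0:ℝ)..y, phiPDF t := by
    intro y
    have := intervalIntegral.integral_Iic_sub_Iic (μ := volume) (f := phiPDF)
      (phiPDF_integrable.integrableOn) (phiPDF_integrable.integrableOn) (a := 0) (b := y)
    have h2 : Phi y - Phi 0 = ∫ t in (0:ℝ)..y, phiPDF t := this
    linarith
  have hD : HasDerivAt (fun y => Phi 0 + ∫ t in (0:ℝ)..y, phiPDF t) (phiPDF x) x := by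
    refine HasDerivAt.const_add _ ?_
    exact intervalIntegral.integral_hasDerivAt_right
      (phiPDF_integrable.intervalIntegrable)
      (phiPDF_cont.aestronglyMeasurable.stronglyMeasurableAtFilter)
      (phiPDF_cont.continuousAt)
  exact hD.congr_of_eventuallyEq (Filter.Eventually.of_forall key)

noncomputable def g (x : ℝ) : ℝ := Phi (Real.sqrt 2 * x) - Phi x

lemma hasDerivAt_g (x : ℝ) :
    HasDerivAt g (Real.sqrt 2 * phiPDF (Real.sqrt 2 * x) - phiPDF x) x := by
  have h1 : HasDerivAt (fun x => Phi (Real.sqrt 2 * x))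
      (Real.sqrt 2 * phiPDF (Real.sqrt 2 * x)) x := by
    have hc : HasDerivAt (fun y : ℝ => Real.sqrt 2 * y) (Real.sqrt 2) x := by
      simpa using (hasDerivAt_id x).const_mul (Real.sqrt 2)
    have h := (hasDerivAt_Phi (Real.sqrt 2 * x)).comp x hc
    have h' : HasDerivAt (fun y => Phi (Real.sqrt 2 * y))
        (phiPDF (Real.sqrt 2 * x) * Real.sqrt 2) x := h
    simpa [mul_comm (phiPDF (Real.sqrt 2 * x)) (Real.sqrt 2)] using h'
  exact h1.sub (hasDerivAt_Phi x)

lemma deriv_g_neg {x : ℝ} (hx : Real.sqrt (Real.log 2) < x) :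
    Real.sqrt 2 * phiPDF (Real.sqrt 2 * x) - phiPDF x < 0 := by
  have hx0 : 0 ≤ x := le_trans (Real.sqrt_nonneg _) hx.le
  have hsq : Real.log 2 < x ^ 2 := by
    have := Real.sq_sqrt (Real.log_nonneg (by norm_num : (1:ℝ) ≤ 2))
    nlinarith [Real.sqrt_nonneg (Real.log 2)]
  have hπ : 0 < Real.sqrt (2 * Real.pi) :=
    Real.sqrt_pos.mpr (by positivity)
  unfold phiPDF
  rw [← mul_div_assoc, div_sub_div_same, div_neg_iff]
  right
  constructor
  · have h2 : (Real.sqrt 2 * x) ^ 2 = 2 * x ^ 2 := by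
      rw [mul_pow, Real.sq_sqrt (by norm_num : (0:ℝ) ≤ 2)]
    rw [h2]
    have e1 : (2:ℝ) < Real.exp (x ^ 2) := by
      rw [← Real.exp_log (by norm_num : (0:ℝ) < 2)]
      exact Real.exp_lt_exp.mpr hsq
    have e2 : Real.sqrt 2 < Real.exp (x ^ 2 / 2) := by
      rw [Real.sqrt_lt' (Real.exp_pos _)]
      rw [sq, ← Real.exp_add, show x ^ 2 / 2 + x ^ 2 / 2 = x ^ 2 by ring]
      exact e1
    have e3 := mul_lt_mul_of_pos_right e2 (Real.exp_pos (-(x ^ 2)))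
    have eb : Real.exp (x ^ 2 / 2) * Real.exp (-(x ^ 2)) = Real.exp (-(x ^ 2) / 2) := by
      rw [← Real.exp_add]; congr 1; ring
    have ea : -(2 * x ^ 2) / 2 = -(x ^ 2) := by ring
    rw [ea]
    linarith
  · linarith [hπ]

lemma g_strictAntiOn : StrictAntiOn g (Set.Ici (Real.sqrt (Real.log 2))) := by
  apply StrictAntiOn.mono (s := Set.Ici (Real.sqrt (Real.log 2)))
  · exact strictAntiOn_of_deriv_neg (convex_Ici _)
      (fun x _ => ((hasDerivAt_g x).differentiableAt).continuousAt.continuousWithinAt)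
      (fun x hx => by
        rw [(hasDerivAt_g x).deriv]
        exact deriv_g_neg (by simpa [interior_Ici] using hx))
  · exact le_refl _

/-- For all real `z > 0` and `δ*` with `δ* − z > √(log 2)`, one has
`Φ(√2·(δ* − z)) − Φ(δ* − z) > Φ(√2·(δ* + z)) − Φ(δ* + z)`. -/
theorem gate_scenario_one_key_inequality (z δstar : ℝ) (hz : 0 < z)
    (hδ : Real.sqrt (Real.log 2) < δstar - z) :
    Phi (Real.sqrt 2 * (δstar + z)) - Phi (δstar + z) <
      Phi (Real.sqrt 2 * (δstar - z)) - Phi (δstar - z) := by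
  have h1 : δstar - z ∈ Set.Ici (Real.sqrt (Real.log 2)) := le_of_lt hδ
  have h2 : δstar + z ∈ Set.Ici (Real.sqrt (Real.log 2)) := by
    simp only [Set.mem_Ici] at *; linarith
  exact g_strictAntiOn h1 h2 (by linarith)
end

section
/- Let α ∈ (0,1) and set z₄ := Φ⁻¹(1 − α/4). For every real t with t − z₄ > Φ⁻¹(1 − √(1 − α)), one has 1 − [Φ(t + z₄) − Φ(t − z₄)]² > α; i.e. in Scenario 2 (biases of equal magnitude and opposite sign in the two subgroups), the asymptotic power of the GATE-based test exceeds the asymptotic power α of the ATE-based test. -/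
open MeasureTheory Real Set

namespace PhiAux

noncomputable def f (t : ℝ) : ℝ := Real.exp (-(t ^ 2) / 2) / Real.sqrt (2 * Real.pi)

lemma f_eq (t : ℝ) : f t = Real.exp (-(1/2 : ℝ) * t ^ 2) / Real.sqrt (2 * Real.pi) := by
  unfold f; ring_nf

lemma f_pos (t : ℝ) : 0 < f t := by
  unfold f
  positivity

lemma f_integrable : Integrable f := by
  rw [show f = fun t => Real.exp (-(1/2 : ℝ) * t ^ 2) / Real.sqrt (2 * Real.pi) from funext f_eq]
  exact (integrable_exp_neg_mul_sq (by norm_num : (0:ℝ) < 1/2)).div_const _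

lemma integral_f : ∫ t, f t = 1 := by
  have h : ∫ x : ℝ, Real.exp (-(1/2 : ℝ) * x ^ 2) = Real.sqrt (Real.pi / (1/2)) :=
    integral_gaussian (1/2)
  have h2 : Real.sqrt (Real.pi / (1/2 : ℝ)) = Real.sqrt (2 * Real.pi) := by norm_num [mul_comm]
  simp only [f_eq, integral_div, h, h2]
  rw [div_self (by positivity)]

lemma Phi_strictMono : StrictMono Phi := by
  intro a b hab
  have hIa : IntegrableOn f (Iic a) := f_integrable.integrableOn
  have hIb : IntegrableOn f (Iic b) := f_integrable.integrableOn
  have hsub : Phi b - Phi a = ∫ x in a..b, f x :=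
    intervalIntegral.integral_Iic_sub_Iic hIa hIb
  have hpos : 0 < ∫ x in a..b, f x :=
    intervalIntegral.intervalIntegral_pos_of_pos (f_integrable.intervalIntegrable) f_pos hab
  linarith [hsub, hpos]

lemma Phi_le_one (x : ℝ) : Phi x ≤ 1 := by
  have : Phi x ≤ ∫ t, f t :=
    setIntegral_le_integral f_integrable
      (Filter.Eventually.of_forall fun t => (f_pos t).le)
  rw [integral_f] at this; exact this

lemma Phi_zero : Phi 0 = 1/2 := by
  have hneg : (∫ x in Iic (0:ℝ), f (-x)) = ∫ x in Ioi (-(0:ℝ)), f x :=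
    integral_comp_neg_Iic 0 f
  have heven : ∀ x, f (-x) = f x := by intro x; unfold f; ring_nf
  simp only [heven, neg_zero] at hneg
  have hsplit : (∫ x in Iic (0:ℝ), f x) + ∫ x in Ioi (0:ℝ), f x = ∫ x, f x :=
    intervalIntegral.integral_Iic_add_Ioi f_integrable.integrableOn f_integrable.integrableOn
  rw [integral_f] at hsplit
  have : Phi 0 = ∫ x in Iic (0:ℝ), f x := rfl
  linarith [hneg, hsplit, this]

end PhiAux

/-- Let `α ∈ (0,1)` and `z₄ := Φ⁻¹(1 − α/4)` (encoded via
`Φ(z₄) = 1 − α/4`).  For every real `t` with `t − z₄ > Φ⁻¹(1 − √(1 − α))` (encoded via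
`Φ(w) = 1 − √(1 − α)` and `t − z₄ > w`), one has `1 − [Φ(t + z₄) − Φ(t − z₄)]² > α`;
i.e. in Scenario 2 the asymptotic power of the GATE-based test exceeds the asymptotic
power `α` of the ATE-based test. -/
theorem gate_beats_ate_scenario_two (α z₄ w : ℝ) (hα : α ∈ Set.Ioo (0 : ℝ) 1)
    (hz₄ : Phi z₄ = 1 - α / 4) (hw : Phi w = 1 - Real.sqrt (1 - α)) :
    ∀ t : ℝ, w < t - z₄ → α < 1 - (Phi (t + z₄) - Phi (t - z₄)) ^ 2 := by
  obtain ⟨hα0, hα1⟩ := hα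
  intro t ht
  have hz₄pos : 0 < z₄ := by
    have : Phi 0 < Phi z₄ := by rw [PhiAux.Phi_zero, hz₄]; linarith
    exact PhiAux.Phi_strictMono.lt_iff_lt.mp this
  set d := Phi (t + z₄) - Phi (t - z₄) with hd
  have hd0 : 0 ≤ d := by
    have : Phi (t - z₄) ≤ Phi (t + z₄) := PhiAux.Phi_strictMono.monotone (by linarith)
    linarith
  have hs : (0:ℝ) < Real.sqrt (1 - α) := Real.sqrt_pos.mpr (by linarith)
  have hlt : d < Real.sqrt (1 - α) := by
    have h1 : Phi w < Phi (t - z₄) := PhiAux.Phi_strictMono ht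
    have h2 : Phi (t + z₄) ≤ 1 := PhiAux.Phi_le_one _
    rw [hw] at h1
    linarith
  have hsq : d ^ 2 < (1 - α) := by
    have := mul_self_lt_mul_self hd0 hlt
    have h2 : Real.sqrt (1 - α) * Real.sqrt (1 - α) = 1 - α :=
      Real.mul_self_sqrt (by linarith)
    nlinarith
  linarith
end
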